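/- For all sufficiently large n, there exists a set S ⊆ F_2^N with N = Θ(n²) such that S spans Ω(√N) distinct Hamming distances but every rainbow subset of S has size at most 2. -/

import Mathlib

/-- A set is rainbow if all pairwise Hamming distances among distinct points are
distinct. -/
def IsRainbow {α : Type*} [DecidableEq α] {N : ℕ} (R : Finset (Fin N → α)) : Prop :=
  ∀ x ∈ R, ∀ y ∈ R, ∀ u ∈ R, ∀ v ∈ R, x ≠ y → u ≠ v →
    hammingDist x y = hammingDist u v → ({x, y} : Finset (Fin N → α)) = {u, v}

/-!
Take `x_k ∈ 𝔽₂^N` (`k ≤ n`) to be the indicator of `[0, k)` together with a private block of `k`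
coordinates; the blocks have lengths `0, 1, …, n` and sit one after another beyond position `n`,
so block `k` starts at `n + (k choose 2)`. Then `d(x_i, x_j) = 2 max(i, j) = max(|x_i|, |x_j|)`.
Among any three of these points the two of smaller weight are equidistant from the third, so no
rainbow subset has three points, while the distances `d(x_0, x_k) = 2k` take `n + 1 ≥ √N / 2`
values for `N = 2n²`.
-/

open Finset
open scoped symmDiff

theorem IsRainbow.eq_of_hammingDist_eq {α : Type*} [DecidableEq α] {N : ℕ}
    {R : Finset (Fin N → α)} (hR : IsRainbow R) {x y z : Fin N → α} (hx : x ∈ R) (hy : y ∈ R)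
    (hz : z ∈ R) (hxz : x ≠ z) (hyz : y ≠ z) (h : hammingDist x z = hammingDist y z) : x = y := by
  have hmem : x ∈ ({y, z} : Finset (Fin N → α)) :=
    hR x hx z hz y hy z hz hxz hyz h ▸ mem_insert_self x {z}
  simpa [hxz] using hmem

theorem IsRainbow.card_le_two_of_hammingDist_eq_max {α : Type*} [DecidableEq α] {N : ℕ}
    {R : Finset (Fin N → α)} (hR : IsRainbow R) (w : (Fin N → α) → ℕ)
    (hdist : ∀ u ∈ R, ∀ v ∈ R, u ≠ v → hammingDist u v = max (w u) (w v)) : #R ≤ 2 := by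
  by_contra! hcard
  obtain ⟨z, hz, hzmax⟩ := exists_max_image R w (card_pos.1 (by omega))
  obtain ⟨x, hx, y, hy, hxy⟩ := one_lt_card.1 (by rw [card_erase_of_mem hz]; omega)
  obtain ⟨hxz, hx⟩ := mem_erase.1 hx
  obtain ⟨hyz, hy⟩ := mem_erase.1 hy
  refine hxy (hR.eq_of_hammingDist_eq hx hy hz hxz hyz ?_)
  rw [hdist x hx z hz hxz, hdist y hy z hz hyz, max_eq_right (hzmax x hx),
    max_eq_right (hzmax y hy)]

theorem hammingDist_ite_mem_eq_card_symmDiff {α : Type*} [DecidableEq α] [Zero α] [One α]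
    [NeZero (1 : α)] {N : ℕ} {s t : Finset ℕ} (hs : ∀ m ∈ s, m < N) (ht : ∀ m ∈ t, m < N) :
    hammingDist (fun i : Fin N => if (i : ℕ) ∈ s then (1 : α) else 0)
      (fun i => if (i : ℕ) ∈ t then 1 else 0) = #(s ∆ t) := by
  have hst : ∀ m ∈ s ∆ t, m < N := fun m hm => by
    rcases mem_symmDiff.1 hm with ⟨hm, -⟩ | ⟨hm, -⟩
    exacts [hs m hm, ht m hm]
  rw [← card_attachFin _ hst, hammingDist]
  congr 1
  ext i
  by_cases his : (i : ℕ) ∈ s <;> by_cases hit : (i : ℕ) ∈ t <;> simp [his, hit, mem_symmDiff]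

theorem Nat.choose_two_add_le_choose_two {i j : ℕ} (h : i < j) : i.choose 2 + i ≤ j.choose 2 := by
  have hsucc : (i + 1).choose 2 = i.choose 2 + i := by
    simpa [add_comm] using Nat.choose_succ_succ' i 1
  exact hsucc ▸ Nat.choose_le_choose 2 h

def staircaseBlock (n k : ℕ) : Finset ℕ := Ico (n + k.choose 2) (n + k.choose 2 + k)

def staircaseSupport (n k : ℕ) : Finset ℕ := range k ∪ staircaseBlock n k

def staircase (N n k : ℕ) : Fin N → ZMod 2 :=
  fun t => if (t : ℕ) ∈ staircaseSupport n k then 1 else 0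

theorem staircaseSupport_symmDiff {n i j : ℕ} (hij : i < j) (hj : j ≤ n) :
    staircaseSupport n i ∆ staircaseSupport n j =
      Ico i j ∪ staircaseBlock n i ∪ staircaseBlock n j := by
  have := Nat.choose_two_add_le_choose_two hij
  ext m
  simp only [staircaseSupport, staircaseBlock, mem_symmDiff, mem_union, mem_range, mem_Ico]
  omega

theorem card_staircaseSupport_symmDiff {n i j : ℕ} (hij : i < j) (hj : j ≤ n) :
    #(staircaseSupport n i ∆ staircaseSupport n j) = 2 * j := by
  have := Nat.choose_two_add_le_choose_two hij
  rw [staircaseSupport_symmDiff hij hj, card_union_of_disjoint, card_union_of_disjoint]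
  · simp only [staircaseBlock, Nat.card_Ico]
    omega
  all_goals
    simp only [disjoint_left, staircaseBlock, mem_union, mem_Ico]
    omega

theorem lt_of_mem_staircaseSupport {N n k m : ℕ} (hk : k ≤ n) (hN : n + (n + 1).choose 2 ≤ N)
    (hm : m ∈ staircaseSupport n k) : m < N := by
  have := Nat.choose_two_add_le_choose_two (Nat.lt_add_one_of_le hk)
  simp only [staircaseSupport, staircaseBlock, mem_union, mem_range, mem_Ico] at hm
  omega

theorem hammingDist_staircase {N n i j : ℕ} (hij : i < j) (hj : j ≤ n)
    (hN : n + (n + 1).choose 2 ≤ N) :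
    hammingDist (staircase N n i) (staircase N n j) = 2 * j := by
  rw [← card_staircaseSupport_symmDiff hij hj]
  exact hammingDist_ite_mem_eq_card_symmDiff
    (fun _ => lt_of_mem_staircaseSupport (hij.le.trans hj) hN)
    (fun _ => lt_of_mem_staircaseSupport hj hN)

theorem staircase_zero (N n : ℕ) : staircase N n 0 = 0 := by
  ext t
  simp [staircase, staircaseSupport, staircaseBlock]

theorem hammingNorm_staircase {N n k : ℕ} (hk : k ≤ n) (hN : n + (n + 1).choose 2 ≤ N) :
    hammingNorm (staircase N n k) = 2 * k := by
  rcases k.eq_zero_or_pos with rfl | hk0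
  · simp [staircase_zero]
  · rw [← hammingDist_zero_left, ← staircase_zero N n, hammingDist_staircase hk0 hk hN]

theorem hammingDist_staircase_eq_max {N n a b : ℕ} (hab : a ≠ b) (ha : a ≤ n) (hb : b ≤ n)
    (hN : n + (n + 1).choose 2 ≤ N) :
    hammingDist (staircase N n a) (staircase N n b) =
      max (hammingNorm (staircase N n a)) (hammingNorm (staircase N n b)) := by
  rw [hammingNorm_staircase ha hN, hammingNorm_staircase hb hN]
  rcases hab.lt_or_gt with h | h
  · rw [hammingDist_staircase h hb hN]; omega
  · rw [hammingDist_comm, hammingDist_staircase h ha hN]; omega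

def staircaseSet (N n : ℕ) : Finset (Fin N → ZMod 2) := (range (n + 1)).image (staircase N n)

theorem succ_le_card_image_hammingDist_staircaseSet {N n : ℕ} (hN : n + (n + 1).choose 2 ≤ N) :
    n + 1 ≤ #((staircaseSet N n ×ˢ staircaseSet N n).image fun p => hammingDist p.1 p.2) := by
  have hsub : (range (n + 1)).image (2 * ·) ⊆
      (staircaseSet N n ×ˢ staircaseSet N n).image fun p => hammingDist p.1 p.2 := by
    intro d hd
    obtain ⟨k, hk, rfl⟩ := mem_image.1 hd
    refine mem_image.2 ⟨(staircase N n 0, staircase N n k),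
      mem_product.2 ⟨mem_image_of_mem _ (by simp), mem_image_of_mem _ hk⟩, ?_⟩
    rw [staircase_zero, hammingDist_zero_left, hammingNorm_staircase (mem_range_succ_iff.1 hk) hN]
  simpa [card_image_of_injective _ (mul_right_injective₀ two_ne_zero)] using card_le_card hsub

theorem IsRainbow.card_le_two_of_subset_staircaseSet {N n : ℕ} {R : Finset (Fin N → ZMod 2)}
    (hR : IsRainbow R) (hRS : R ⊆ staircaseSet N n) (hN : n + (n + 1).choose 2 ≤ N) :
    #R ≤ 2 := by
  refine hR.card_le_two_of_hammingDist_eq_max hammingNorm fun u hu v hv huv => ?_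
  obtain ⟨a, ha, rfl⟩ := mem_image.1 (hRS hu)
  obtain ⟨b, hb, rfl⟩ := mem_image.1 (hRS hv)
  exact hammingDist_staircase_eq_max (fun h => huv (h ▸ rfl)) (mem_range_succ_iff.1 ha)
    (mem_range_succ_iff.1 hb) hN

/-- for all sufficiently large `n` there exist `N = Θ(n²)` and
`S ⊆ 𝔽₂^N` spanning `Ω(√N)` distinct Hamming distances while every rainbow subset
of `S` has size at most 2. -/
theorem stmt12 :
    ∃ c : ℝ, 0 < c ∧ ∃ n₀ : ℕ, ∀ n ≥ n₀, ∃ N : ℕ, ∃ S : Finset (Fin N → ZMod 2),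
      n ^ 2 ≤ N ∧ N ≤ 3 * n ^ 2 ∧
      c * Real.sqrt N ≤ (((S ×ˢ S).image fun p => hammingDist p.1 p.2).card : ℝ) ∧
      ∀ R ⊆ S, IsRainbow R → R.card ≤ 2 := by
  refine ⟨1 / 2, by norm_num, 0, fun n _ => ?_⟩
  have hN : n + (n + 1).choose 2 ≤ 2 * n ^ 2 := by
    have : (n + 1).choose 2 ≤ n ^ 2 := by
      rw [Nat.choose_two_right, add_tsub_cancel_right]
      exact Nat.div_le_of_le_mul (by nlinarith)
    nlinarith
  refine ⟨2 * n ^ 2, staircaseSet (2 * n ^ 2) n, by omega, by omega, ?_,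
    fun _ hRS hR => hR.card_le_two_of_subset_staircaseSet hRS hN⟩
  have hsqrt : Real.sqrt (2 * n ^ 2 : ℕ) ≤ 2 * n := by
    rw [Real.sqrt_le_left (by positivity)]
    push_cast
    nlinarith
  calc 1 / 2 * Real.sqrt (2 * n ^ 2 : ℕ) ≤ n + 1 := by linarith
    _ ≤ _ := by exact_mod_cast succ_le_card_image_hammingDist_staircaseSet hN
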